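/- Let y(x) be the formal power series solution of y(1-y)^\tau = x with y(0)=0. Then the formal power series 1 + ((1+\tau)/\tau) \sum_{k ≥ 1} (\prod_{a=0}^{k-1}(k\tau+a)/k!) x^k equals 1/(1 - (\tau+1) y(x)). -/

import Mathlib

open PowerSeries

/-- `(1+u)^τ := ∑_n binom(τ,n) u^n`, the formal binomial power. -/
noncomputable def binomPow {K : Type*} [Field K] (τ : K) (u : PowerSeries K) :
    PowerSeries K :=
  PowerSeries.mk fun m => ∑ n ∈ Finset.range (m + 1),
    ((∏ a ∈ Finset.range n, (τ - (a : K))) / (Nat.factorial n : K)) *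
      PowerSeries.coeff (R := K) m (u ^ n)

/-!
Write `c s` for `binomPow s (-y) = (1 - y)^s` and `D = 1 - (τ + 1) y`. Exponents add
(`c (s + t) = c s * c t`, since `binomPow` is the substitution of `-y` into the binomial series),
so `y * c τ = x` gives `y^j = x^j * c (-jτ)`. Expanding `c s` binomially in `-y` and inducting on
the degree, a Chu–Vandermonde identity yields the Lagrange coefficients
`(n + 1) [x^(n+1)] c s = -s * binom((n + 1)τ + n - s, n)`. Then `D⁻¹ = 1 + (τ + 1) y D⁻¹` gives
`c s * D⁻¹ = c s + (τ + 1) x * c (s - τ) * D⁻¹`, and a second induction on the degree shows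
`[x^k] (c s * D⁻¹) = binom(kτ + k - s, k)`. At `s = 0` this is the claim, because
`(1 + τ)/τ * ∏_{a<k} (kτ + a) / k! = binom(kτ + k, k)`.
-/

open Finset

namespace Ring

section CommRing

variable {R : Type*} [CommRing R] [BinomialRing R]

theorem choose_neg_sub_one (a : R) (n : ℕ) :
    choose (-a - 1) n = (-1) ^ n * choose (a + n) n := by
  rw [show -a - 1 = -(a + 1) by ring, choose_neg, add_sub_right_comm, add_sub_cancel_right,
    Units.smul_def, Int.coe_negOnePow_natCast, zsmul_eq_mul]
  push_cast
  ring

theorem sum_antidiagonal_choose_add_mul_choose_add (a b : R) (M : ℕ) :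
    ∑ p ∈ antidiagonal M, choose (a + p.1) p.1 * choose (b + p.2) p.2 =
      choose (a + b + 1 + M) M := by
  have h := add_choose_eq M (Commute.all (-a - 1) (-b - 1))
  rw [show -a - 1 + (-b - 1) = -(a + b + 1) - 1 by ring, choose_neg_sub_one] at h
  have hsign : ∀ p ∈ antidiagonal M, choose (-a - 1) p.1 * choose (-b - 1) p.2 =
      (-1) ^ M * (choose (a + p.1) p.1 * choose (b + p.2) p.2) := by
    intro p hp
    rw [choose_neg_sub_one, choose_neg_sub_one, ← mem_antidiagonal.mp hp, pow_add]
    ring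
  rw [sum_congr rfl hsign, ← mul_sum] at h
  exact ((isUnit_neg_one.pow M).mul_left_cancel h).symm

theorem succ_mul_choose_succ_succ (r : R) (k : ℕ) :
    ((k : R) + 1) * choose (r + 1) (k + 1) = (r + 1) * choose r k := by
  simpa [nsmul_eq_mul, choose_one_right] using choose_smul_choose (r + 1) (Nat.le_add_left 1 k)

theorem succ_mul_choose_succ (r : R) (k : ℕ) :
    ((k : R) + 1) * choose r (k + 1) = (r - k) * choose r k := by
  have h := choose_smul_choose r (Nat.le_succ k)
  simp only [Nat.succ_eq_add_one, Nat.choose_succ_self_right, nsmul_eq_mul, Nat.cast_add,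
    Nat.cast_one, add_tsub_cancel_left, choose_one_right] at h
  linear_combination h

end CommRing

section Field

variable {K : Type*} [Field K] [CharZero K]

open Polynomial in
theorem choose_eq_prod_range_div_factorial (r : K) (n : ℕ) :
    choose r n = (∏ i ∈ range n, (r - i)) / n.factorial := by
  rw [choose_eq_smul, ← aeval_eq_smeval, aeval_def, eval₂_eq_eval_map, descPochhammer_map,
    descPochhammer_eval_eq_prod_range, smul_eq_mul, inv_mul_eq_div]

theorem choose_add_natCast_self {x : K} (hx : x ≠ 0) (k : ℕ) :
    choose (x + k) k = (x + k) / x * ((∏ a ∈ range k, (x + a)) / k.factorial) := by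
  have hrefl : ∏ i ∈ range k, (x + k - i) = ∏ a ∈ range k, (x + (a + 1)) := by
    rw [← prod_range_reflect]
    refine prod_congr rfl fun i hi => ?_
    rw [Nat.sub_sub, add_comm 1 i, Nat.cast_sub (mem_range.mp hi)]
    push_cast
    ring
  have hshift : x * ∏ a ∈ range k, (x + (a + 1)) = (x + k) * ∏ a ∈ range k, (x + a) := by
    have h := prod_range_succ' (fun a : ℕ => x + a) k
    rw [prod_range_succ] at h
    push_cast at h
    linear_combination -h
  rw [choose_eq_prod_range_div_factorial, hrefl, ← mul_div_assoc, div_mul_eq_mul_div,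
    ← hshift, mul_div_cancel_left₀ _ hx]

end Field

end Ring

theorem PowerSeries.coeff_pow_eq_zero_of_lt {R : Type*} [CommRing R] {u : R⟦X⟧}
    (hu : constantCoeff u = 0) {m n : ℕ} (h : m < n) : coeff m (u ^ n) = 0 :=
  X_pow_dvd_iff.mp (pow_dvd_pow_of_dvd (X_dvd_iff.mpr hu) n) m h

section binomPow

variable {K : Type*} [Field K] [CharZero K]

theorem coeff_binomPow (s : K) (u : K⟦X⟧) (m : ℕ) :
    coeff m (binomPow s u) = ∑ n ∈ range (m + 1), Ring.choose s n * coeff m (u ^ n) := by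
  simp only [binomPow, coeff_mk, Ring.choose_eq_prod_range_div_factorial]

theorem constantCoeff_binomPow (s : K) (u : K⟦X⟧) : constantCoeff (binomPow s u) = 1 := by
  rw [← coeff_zero_eq_constantCoeff_apply, coeff_binomPow]
  simp

theorem binomPow_eq_subst {u : K⟦X⟧} (hu : constantCoeff u = 0) (s : K) :
    binomPow s u = (binomialSeries K s).subst u := by
  ext m
  rw [coeff_binomPow, coeff_subst' (HasSubst.of_constantCoeff_zero' hu),
    finsum_eq_sum_of_support_subset (s := range (m + 1))]
  · simp
  · intro n hn
    by_contra hnm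
    simp_all [coeff_pow_eq_zero_of_lt hu]

theorem binomPow_add {u : K⟦X⟧} (hu : constantCoeff u = 0) (s t : K) :
    binomPow (s + t) u = binomPow s u * binomPow t u := by
  simp only [binomPow_eq_subst hu, binomialSeries_add,
    subst_mul (HasSubst.of_constantCoeff_zero' hu)]

theorem binomPow_zero {u : K⟦X⟧} (hu : constantCoeff u = 0) : binomPow 0 u = 1 := by
  rw [binomPow_eq_subst hu, binomialSeries_zero (R := K),
    ← coe_substAlgHom (HasSubst.of_constantCoeff_zero' hu), map_one]

end binomPow

section Solution

variable {K : Type*} [Field K] [CharZero K] {τ : K} {y : K⟦X⟧}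

theorem mul_binomPow_neg_eq_X_mul (h0 : constantCoeff y = 0) (heq : y * binomPow τ (-y) = X)
    (s : K) : y * binomPow s (-y) = X * binomPow (s - τ) (-y) := by
  have hy : constantCoeff (-y) = 0 := by simp [h0]
  calc y * binomPow s (-y) = y * binomPow (τ + (s - τ)) (-y) := by rw [add_sub_cancel]
    _ = y * binomPow τ (-y) * binomPow (s - τ) (-y) := by rw [binomPow_add hy, mul_assoc]
    _ = X * binomPow (s - τ) (-y) := by rw [heq]

theorem pow_mul_binomPow_neg_eq_X_pow_mul (h0 : constantCoeff y = 0)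
    (heq : y * binomPow τ (-y) = X) (j : ℕ) (s : K) :
    y ^ j * binomPow s (-y) = X ^ j * binomPow (s - j * τ) (-y) := by
  induction j generalizing s with
  | zero => simp
  | succ j ih =>
    rw [pow_succ', mul_assoc, ih, mul_left_comm, mul_binomPow_neg_eq_X_mul h0 heq, ← mul_assoc,
      ← pow_succ, sub_sub, Nat.cast_succ, add_one_mul]

theorem coeff_add_neg_pow (h0 : constantCoeff y = 0) (heq : y * binomPow τ (-y) = X) (n m : ℕ) :
    coeff (m + n) ((-y) ^ n) = (-1) ^ n * coeff m (binomPow (-(n * τ)) (-y)) := by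
  have hy : constantCoeff (-y) = 0 := by simp [h0]
  have h := pow_mul_binomPow_neg_eq_X_pow_mul h0 heq n 0
  rw [binomPow_zero hy, mul_one, zero_sub] at h
  have hsign : (-1 : K⟦X⟧) ^ n = C ((-1) ^ n) := by simp
  rw [neg_pow, h, hsign, coeff_C_mul, mul_comm (X ^ n), coeff_mul_X_pow]

-- `ih` is `succ_mul_coeff_succ_binomPow_neg` (below) in the degrees `k < m`.
theorem add_mul_coeff_binomPow_neg_mul (u : K⟦X⟧) (m j : ℕ)
    (ih : ∀ k < m, ∀ s : K,
      ((k : K) + 1) * coeff (k + 1) (binomPow s u) = -s * Ring.choose ((k + 1) * τ + k - s) k) :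
    ((m : K) + j) * coeff m (binomPow (-(j * τ)) u) = j * Ring.choose ((m + j) * τ + m - 1) m := by
  cases m with
  | zero => simp [constantCoeff_binomPow]
  | succ k =>
    have h := ih k k.lt_succ_self (-(j * τ))
    have hB := Ring.succ_mul_choose_succ (((k : K) + 1 + j) * τ + k) k
    rw [show ((k : K) + 1) * τ + k - -(j * τ) = ((k : K) + 1 + j) * τ + k by ring] at h
    apply mul_left_cancel₀ (Nat.cast_add_one_ne_zero k : (k : K) + 1 ≠ 0)
    push_cast
    rw [show ((k : K) + 1 + j) * τ + (k + 1) - 1 = ((k : K) + 1 + j) * τ + k by ring]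
    linear_combination ((k : K) + 1 + j) * h - (j : K) * hB

theorem succ_mul_coeff_succ_binomPow_neg (h0 : constantCoeff y = 0)
    (heq : y * binomPow τ (-y) = X) (M : ℕ) (s : K) :
    ((M : K) + 1) * coeff (M + 1) (binomPow s (-y)) =
      -s * Ring.choose ((M + 1) * τ + M - s) M := by
  induction M using Nat.strong_induction_on generalizing s with
  | _ M ih =>
  have hterm : ∀ p ∈ antidiagonal M,
      ((M : K) + 1) * (Ring.choose s (p.1 + 1) * coeff (M + 1) ((-y) ^ (p.1 + 1))) =
        -s * (Ring.choose (-s + p.1) p.1 * Ring.choose ((M + 1) * τ - 1 + p.2) p.2) := by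
    rintro ⟨l, m⟩ hp
    obtain rfl : l + m = M := mem_antidiagonal.mp hp
    have hU := add_mul_coeff_binomPow_neg_mul (τ := τ) (-y) m (l + 1)
      fun k hk => ih k (by omega)
    have hA := Ring.succ_mul_choose_succ_succ (s - 1) l
    rw [sub_add_cancel, show s - 1 = -(-s) - 1 by ring, Ring.choose_neg_sub_one] at hA
    rw [show l + m + 1 = m + (l + 1) by ring, coeff_add_neg_pow h0 heq]
    push_cast at hU ⊢
    rw [show ((m : K) + (l + 1)) * τ + m - 1 = ((l + m : K) + 1) * τ - 1 + m by ring] at hU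
    have hsq : ((-1 : K) ^ l) * (-1) ^ l = 1 := by rw [← mul_pow]; simp
    linear_combination (-1 : K) ^ (l + 1) * Ring.choose s (l + 1) * hU
      + (-1 : K) ^ (l + 1) * Ring.choose (((l + m : K) + 1) * τ - 1 + m) m * hA
      - s * Ring.choose (-s + l) l * Ring.choose (((l + m : K) + 1) * τ - 1 + m) m * hsq
  rw [coeff_binomPow, sum_range_succ', mul_add, mul_sum,
    ← Nat.sum_antidiagonal_eq_sum_range_succ fun l _ =>
      ((M : K) + 1) * (Ring.choose s (l + 1) * coeff (M + 1) ((-y) ^ (l + 1))),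
    sum_congr rfl hterm, ← mul_sum, Ring.sum_antidiagonal_choose_add_mul_choose_add, pow_zero, coeff_one, if_neg M.succ_ne_zero, mul_zero, mul_zero, add_zero,
    show -s + ((M + 1) * τ - 1) + 1 + M = (M + 1) * τ + M - s by ring]

theorem coeff_binomPow_neg_mul_inv (h0 : constantCoeff y = 0) (heq : y * binomPow τ (-y) = X)
    (k : ℕ) (s : K) :
    coeff k (binomPow s (-y) * (1 - C (τ + 1) * y)⁻¹) = Ring.choose (k * τ + k - s) k := by
  induction k generalizing s with
  | zero => simp [h0, constantCoeff_binomPow]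
  | succ k ih =>
    have hD : (1 - C (τ + 1) * y)⁻¹ = 1 + C (τ + 1) * y * (1 - C (τ + 1) * y)⁻¹ := by
      have := PowerSeries.mul_inv_cancel (1 - C (τ + 1) * y) (by simp [h0])
      linear_combination this
    have hexp : binomPow s (-y) * (1 - C (τ + 1) * y)⁻¹ =
        binomPow s (-y) + C (τ + 1) * (X * (binomPow (s - τ) (-y) * (1 - C (τ + 1) * y)⁻¹)) := by
      calc binomPow s (-y) * (1 - C (τ + 1) * y)⁻¹
          = binomPow s (-y) + C (τ + 1) * (y * binomPow s (-y)) * (1 - C (τ + 1) * y)⁻¹ := by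
            conv_lhs => rw [hD]
            ring
        _ = _ := by rw [mul_binomPow_neg_eq_X_mul h0 heq]; ring
    have hP := succ_mul_coeff_succ_binomPow_neg h0 heq k s
    have hA := Ring.succ_mul_choose_succ_succ ((k + 1) * τ + k - s) k
    rw [hexp, map_add, coeff_C_mul, coeff_succ_X_mul, ih]
    apply mul_left_cancel₀ (Nat.cast_add_one_ne_zero k : (k : K) + 1 ≠ 0)
    push_cast
    rw [show (k : K) * τ + k - (s - τ) = (k + 1) * τ + k - s by ring,
      show ((k : K) + 1) * τ + (k + 1) - s = (k + 1) * τ + k - s + 1 by ring]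
    linear_combination hP - hA

theorem coeff_inv_one_sub_mul (h0 : constantCoeff y = 0) (heq : y * binomPow τ (-y) = X) (k : ℕ) :
    coeff k (1 - C (τ + 1) * y)⁻¹ = Ring.choose (k * τ + k) k := by
  have hy : constantCoeff (-y) = 0 := by simp [h0]
  simpa [binomPow_zero hy] using coeff_binomPow_neg_mul_inv h0 heq k 0

end Solution

theorem mk_mul_one_sub_C_mul_eq_one {K : Type*} [Field K] [CharZero K] {τ : K} {y : K⟦X⟧}
    (hτ : τ ≠ 0) (h0 : constantCoeff y = 0) (heq : y * binomPow τ (-y) = X) :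
    (mk fun k => if k = 0 then 1 else
        ((1 + τ) / τ) * ((∏ a ∈ range k, ((k : K) * τ + (a : K))) / (k.factorial : K))) *
      (1 - C (τ + 1) * y) = 1 := by
  have hS : (mk fun k => if k = 0 then 1 else
        ((1 + τ) / τ) * ((∏ a ∈ range k, ((k : K) * τ + (a : K))) / (k.factorial : K))) =
      (1 - C (τ + 1) * y)⁻¹ := by
    ext k
    rw [coeff_mk, coeff_inv_one_sub_mul h0 heq]
    rcases eq_or_ne k 0 with rfl | hk
    · simp
    · have hkτ : (k : K) * τ ≠ 0 := mul_ne_zero (Nat.cast_ne_zero.mpr hk) hτ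
      rw [if_neg hk, Ring.choose_add_natCast_self hkτ]
      congr 1
      field_simp
      ring
  rw [hS]
  exact PowerSeries.inv_mul_cancel _ (by simp [h0])

/-- If `y(x)` solves `y(1-y)^τ = x`, `y(0) = 0` (with `τ = RatFunc.X`),
then `1 + ((1+τ)/τ) ∑_{k≥1} (∏_{a=0}^{k-1}(kτ+a)/k!) x^k = 1/(1-(τ+1)y(x))`,
i.e. the displayed series times `1 - (τ+1)y` equals `1`. -/
theorem t_series (y : PowerSeries (RatFunc ℚ))
    (h0 : PowerSeries.constantCoeff (R := RatFunc ℚ) y = 0)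
    (heq : y * binomPow (RatFunc.X) (-y) = PowerSeries.X) :
    (PowerSeries.mk fun k =>
        if k = 0 then 1 else
          ((1 + RatFunc.X) / RatFunc.X) *
            ((∏ a ∈ Finset.range k, ((k : RatFunc ℚ) * RatFunc.X + (a : RatFunc ℚ))) /
              (Nat.factorial k : RatFunc ℚ))) *
      (1 - PowerSeries.C (R := RatFunc ℚ) (RatFunc.X + 1) * y) = 1 :=
  mk_mul_one_sub_C_mul_eq_one RatFunc.X_ne_zero h0 heq
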